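/- A run of the product automaton is accepting iff the corresponding trace violates the specification: given the product construction TS_p = TS ⊗ A where A accepts exactly the words satisfying ¬φ, if TS_p has no reachable state ⟨s,q⟩ with q ∈ F lying on a cycle, then Trace(TS) ∩ Words(¬φ) = ∅, i.e., TS ⊨ φ. In abstract graph-theoretic form: in a finite directed graph, there exists an infinite path visiting a set F of vertices infinitely often starting from an initial set if and only if there exists a vertex v ∈ F that is reachable from the initial set and lies on a directed cycle. -/

import Mathlib

/-!
If a path visits `F` infinitely often, then by pigeonhole on the finite vertex set it visits some
`v ∈ F` at two times `m < n`: its prefix up to `m` reaches `v` from `I`, and the segment from `m`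
to `n` is a cycle through `v`. Conversely, unrolling a cycle through `v` gives a periodic path that
is at `v` at every multiple of its period, and prepending a path from `I` to `v` keeps that.
-/

open Relation Set

section Paths

variable {V : Type*} {E : V → V → Prop}

theorem reflTransGen_of_forall_rel_succ {π : ℕ → V} (hπ : ∀ n, E (π n) (π (n + 1)))
    {m n : ℕ} (hmn : m ≤ n) : ReflTransGen E (π m) (π n) :=
  (reflTransGen_of_succ_of_le (fun i j => E (π i) (π j)) (fun i _ => hπ i) hmn).lift π
    fun _ _ => id

theorem transGen_of_forall_rel_succ {π : ℕ → V} (hπ : ∀ n, E (π n) (π (n + 1)))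
    {m n : ℕ} (hmn : m < n) : TransGen E (π m) (π n) :=
  (transGen_of_succ_of_lt (fun i j => E (π i) (π j)) (fun i _ => hπ i) hmn).lift π
    fun _ _ => id

theorem Relation.TransGen.exists_chain {a b : V} (h : TransGen E a b) :
    ∃ L > 0, ∃ f : ℕ → V, f 0 = a ∧ f L = b ∧ ∀ k < L, E (f k) (f (k + 1)) := by
  induction h using TransGen.head_induction_on with
  | @single a hab => exact ⟨1, one_pos, fun | 0 => a | _ + 1 => b, rfl, rfl, by simpa using hab⟩
  | @head a c hac _ ih =>
    obtain ⟨L, hL, f, rfl, hfL, hf⟩ := ih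
    refine ⟨L + 1, L.succ_pos, fun | 0 => a | n + 1 => f n, rfl, hfL, ?_⟩
    rintro (_ | k) hk
    · exact hac
    · exact hf k (by omega)

theorem exists_periodic_path_of_transGen_self {v : V} (h : TransGen E v v) :
    ∃ L > 0, ∃ π : ℕ → V, π 0 = v ∧ (∀ n, E (π n) (π (n + 1))) ∧ Function.Periodic π L := by
  obtain ⟨L, hL, f, hf0, hfL, hf⟩ := h.exists_chain
  refine ⟨L, hL, fun n => f (n % L), by simpa using hf0, fun n => ?_, fun n => by simp⟩
  have hr : n % L + 1 ≤ L := Nat.mod_lt n hL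
  have hstep := hf (n % L) hr
  show E (f (n % L)) (f ((n + 1) % L))
  rw [← Nat.mod_add_mod]
  obtain hwrap | hlt := hr.eq_or_lt
  · rw [hwrap, hfL, ← hf0] at hstep
    rwa [hwrap, Nat.mod_self]
  · rwa [Nat.mod_eq_of_lt hlt]

theorem Relation.ReflTransGen.exists_path_append {a b : V} (h : ReflTransGen E a b)
    {π : ℕ → V} (hπ0 : π 0 = b) (hπ : ∀ n, E (π n) (π (n + 1))) :
    ∃ σ : ℕ → V, σ 0 = a ∧ (∀ n, E (σ n) (σ (n + 1))) ∧ ∃ k, ∀ n, σ (n + k) = π n := by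
  induction h using ReflTransGen.head_induction_on with
  | refl => exact ⟨π, hπ0, hπ, 0, fun _ => rfl⟩
  | @head a c hac _ ih =>
    obtain ⟨σ, rfl, hσ, k, hk⟩ := ih
    refine ⟨fun | 0 => a | n + 1 => σ n, rfl, ?_, k + 1, hk⟩
    rintro (_ | n)
    · exact hac
    · exact hσ n

end Paths

theorem stmt_14 {V : Type*} [Fintype V] (E : V → V → Prop) (I F : Set V) :
    (∃ π : ℕ → V, π 0 ∈ I ∧ (∀ n, E (π n) (π (n + 1))) ∧
        {n : ℕ | π n ∈ F}.Infinite) ↔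
      (∃ v ∈ F, (∃ i ∈ I, Relation.ReflTransGen E i v) ∧
        Relation.TransGen E v v) := by
  constructor
  · rintro ⟨π, hπ0, hπ, hinf⟩
    obtain ⟨m, hmF, n, -, hmn, hrep⟩ :=
      hinf.exists_lt_map_eq_of_mapsTo (mapsTo_univ π _) finite_univ
    refine ⟨π m, hmF, ⟨π 0, hπ0, reflTransGen_of_forall_rel_succ hπ m.zero_le⟩, ?_⟩
    simpa only [hrep] using transGen_of_forall_rel_succ hπ hmn
  · rintro ⟨v, hvF, ⟨i, hiI, hiv⟩, hvv⟩
    obtain ⟨L, hL, π, hπ0, hπ, hper⟩ := exists_periodic_path_of_transGen_self hvv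
    obtain ⟨σ, hσ0, hσ, k, hσπ⟩ := hiv.exists_path_append hπ0 hπ
    refine ⟨σ, hσ0 ▸ hiI, hσ, ?_⟩
    refine infinite_of_injective_forall_mem (f := fun j => j * L + k) ?_ fun j => ?_
    · exact (add_left_injective k).comp (mul_left_injective₀ hL.ne')
    · have hj : π (j * L) = v := by simpa [hπ0] using hper.nat_mul_eq j
      simpa [hσπ, hj] using hvF
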